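/- If G is a hypo-unique-domination graph of order at least 3, then every vertex of G is γ-critical, i.e., γ(G−v) < γ(G) for all v ∈ V(G). -/
import Mathlib


open SimpleGraph

variable {V : Type*}

/-- `D` is a dominating set of `G`. -/
def IsDomSet (G : SimpleGraph V) (D : Finset V) : Prop :=
  ∀ v : V, ∃ u ∈ D, u = v ∨ G.Adj u v

/-- The domination number `γ(G)`. -/
noncomputable def domNum (G : SimpleGraph V) : ℕ :=
  sInf {n | ∃ D : Finset V, IsDomSet G D ∧ D.card = n}

/-- `D` is a minimum dominating set (γ-set) of `G`. -/
def IsGammaSet (G : SimpleGraph V) (D : Finset V) : Prop :=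
  IsDomSet G D ∧ D.card = domNum G

/-- The graph `G - x` obtained by deleting the vertex `x`. -/
def vdel (G : SimpleGraph V) (x : V) : SimpleGraph {u : V // u ≠ x} :=
  SimpleGraph.comap Subtype.val G

/-- `G` is a hypo-unique-domination graph: `G` has at least two γ-sets,
but `G - x` has a unique γ-set for every vertex `x`. -/
def HypoUD (G : SimpleGraph V) : Prop :=
  (∃ D₁ D₂ : Finset V, IsGammaSet G D₁ ∧ IsGammaSet G D₂ ∧ D₁ ≠ D₂) ∧
  ∀ x : V, ∃! D : Finset {u : V // u ≠ x}, IsGammaSet (vdel G x) D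

/-- `D` is an efficient dominating set of `G`: every vertex is dominated exactly once. -/
def IsEDS (G : SimpleGraph V) (D : Finset V) : Prop :=
  ∀ v : V, ∃! u : V, u ∈ D ∧ (u = v ∨ G.Adj u v)

/-- `G` is a hypo-efficient-domination graph: `G` has no EDS,
but `G - x` has an EDS for every vertex `x`. -/
def HypoED (G : SimpleGraph V) : Prop :=
  (¬ ∃ D : Finset V, IsEDS G D) ∧
  ∀ x : V, ∃ D : Finset {u : V // u ≠ x}, IsEDS (vdel G x) D

set_option linter.unusedSectionVars false
set_option maxHeartbeats 1600000

section HypoUDAux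

variable [Fintype V] [DecidableEq V]



/-- `D ⊆ V \ {x}` dominates every vertex other than `x`. -/
def DomA (G : SimpleGraph V) (x : V) (D : Finset V) : Prop :=
  x ∉ D ∧ ∀ u : V, u ≠ x → ∃ d ∈ D, d = u ∨ G.Adj d u

theorem domSet_nonempty (G : SimpleGraph V) :
    {n | ∃ D : Finset V, IsDomSet G D ∧ D.card = n}.Nonempty :=
  ⟨(Finset.univ : Finset V).card, Finset.univ, fun v => ⟨v, Finset.mem_univ v, Or.inl rfl⟩, rfl⟩

theorem domNum_le (G : SimpleGraph V) {D : Finset V} (hD : IsDomSet G D) :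
    domNum G ≤ D.card :=
  Nat.sInf_le ⟨D, hD, rfl⟩

theorem exists_gammaSet (G : SimpleGraph V) :
    ∃ D : Finset V, IsDomSet G D ∧ D.card = domNum G :=
  Nat.sInf_mem (domSet_nonempty G)

/-- Transfer: a `DomA` set gives a dominating set of `vdel G x` of the same card. -/
theorem domA_toSub (G : SimpleGraph V) {x : V} {D : Finset V} (hD : DomA G x D) :
    IsDomSet (vdel G x) (D.subtype (· ≠ x)) ∧ (D.subtype (· ≠ x)).card = D.card := by
  constructor
  · rintro ⟨u, hu⟩
    obtain ⟨d, hdD, hdu⟩ := hD.2 u hu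
    have hdx : d ≠ x := fun h => hD.1 (h ▸ hdD)
    refine ⟨⟨d, hdx⟩, Finset.mem_subtype.2 hdD, ?_⟩
    rcases hdu with h | h
    · exact Or.inl (Subtype.ext h)
    · exact Or.inr h
  · have : D.filter (fun y => y ≠ x) = D :=
      Finset.filter_true_of_mem (fun y hy h => hD.1 (h ▸ hy))
    calc (D.subtype (· ≠ x)).card
        = ((D.subtype (· ≠ x)).map (Function.Embedding.subtype _)).card :=
          (Finset.card_map _).symm
      _ = (D.filter (fun y => y ≠ x)).card := by rw [Finset.subtype_map]
      _ = D.card := by rw [this]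

theorem domA_ofSub (G : SimpleGraph V) {x : V} {D' : Finset {u : V // u ≠ x}}
    (hD' : IsDomSet (vdel G x) D') :
    DomA G x (D'.map (Function.Embedding.subtype _)) ∧
      (D'.map (Function.Embedding.subtype _)).card = D'.card := by
  refine ⟨⟨?_, ?_⟩, Finset.card_map _⟩
  · intro hmem
    obtain ⟨a, _, ha⟩ := Finset.mem_map.1 hmem
    exact a.2 ha
  · intro u hu
    obtain ⟨d, hdD, hdu⟩ := hD' ⟨u, hu⟩
    refine ⟨d.1, Finset.mem_map_of_mem _ hdD, ?_⟩
    rcases hdu with h | h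
    · exact Or.inl (congrArg Subtype.val h)
    · exact Or.inr h

theorem domNum_vdel_le (G : SimpleGraph V) {x : V} {D : Finset V} (hD : DomA G x D) :
    domNum (vdel G x) ≤ D.card := by
  obtain ⟨h1, h2⟩ := domA_toSub G hD
  calc domNum (vdel G x) ≤ (D.subtype (· ≠ x)).card := domNum_le _ h1
    _ = D.card := h2

theorem exists_domA (G : SimpleGraph V) (x : V) :
    ∃ D : Finset V, DomA G x D ∧ D.card = domNum (vdel G x) := by
  obtain ⟨D', hD', hc⟩ := exists_gammaSet (vdel G x)
  obtain ⟨h1, h2⟩ := domA_ofSub G hD'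
  exact ⟨_, h1, h2.trans hc⟩

theorem subtype_map_eq (x : V) {D : Finset V} (hx : x ∉ D) :
    (D.subtype (· ≠ x)).map (Function.Embedding.subtype _) = D := by
  rw [Finset.subtype_map]
  exact Finset.filter_true_of_mem (fun y hy h => hx (h ▸ hy))

/-- T3: uniqueness transfer. -/
theorem domA_unique (G : SimpleGraph V) (h : HypoUD G) {x : V} {D₁ D₂ : Finset V}
    (h1 : DomA G x D₁) (h2 : DomA G x D₂)
    (hc1 : D₁.card = domNum (vdel G x)) (hc2 : D₂.card = domNum (vdel G x)) :
    D₁ = D₂ := by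
  obtain ⟨U, _, hU⟩ := h.2 x
  have e1 : D₁.subtype (· ≠ x) = U :=
    hU _ ⟨(domA_toSub G h1).1, (domA_toSub G h1).2.trans hc1⟩
  have e2 : D₂.subtype (· ≠ x) = U :=
    hU _ ⟨(domA_toSub G h2).1, (domA_toSub G h2).2.trans hc2⟩
  have := e1.trans e2.symm
  calc D₁ = (D₁.subtype (· ≠ x)).map (Function.Embedding.subtype _) :=
        (subtype_map_eq x h1.1).symm
    _ = (D₂.subtype (· ≠ x)).map (Function.Embedding.subtype _) := by rw [this]
    _ = D₂ := subtype_map_eq x h2.1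



theorem gammaSet_avoid_domA (G : SimpleGraph V) {M : Finset V} (hM : IsGammaSet G M)
    {x : V} (hx : x ∉ M) : DomA G x M := ⟨hx, fun u _ => hM.1 u⟩

/-- A `DomA x` set together with `x` dominates `G`. -/
theorem domA_insert (G : SimpleGraph V) {x : V} {D : Finset V} (hD : DomA G x D) :
    IsDomSet G (insert x D) := by
  intro u
  by_cases hu : u = x
  · exact ⟨x, Finset.mem_insert_self _ _, Or.inl hu.symm⟩
  · obtain ⟨d, hd, hdu⟩ := hD.2 u hu
    exact ⟨d, Finset.mem_insert_of_mem hd, hdu⟩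

/-- If a set of card < γ dominates G, contradiction. -/
theorem not_small_dom (G : SimpleGraph V) {D : Finset V} (hD : IsDomSet G D)
    (hc : D.card < domNum G) : False :=
  absurd (domNum_le G hD) (not_le.2 hc)

/-- If a DomA x set has card < γ(G-x), contradiction. -/
theorem not_small_domA (G : SimpleGraph V) {x : V} {D : Finset V} (hD : DomA G x D)
    (hc : D.card < domNum (vdel G x)) : False :=
  absurd (domNum_vdel_le G hD) (not_le.2 hc)

/-- K2: structure of a critical vertex. -/
theorem critical_data (G : SimpleGraph V) (h : HypoUD G) {z : V}
    (hz : domNum (vdel G z) < domNum G) :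
    ∃ D : Finset V, DomA G z D ∧ D.card + 1 = domNum G ∧
      D.card = domNum (vdel G z) ∧
      (∀ D' : Finset V, DomA G z D' → D'.card + 1 = domNum G → D' = D) := by
  obtain ⟨D, hD, hc⟩ := exists_domA G z
  have hins : IsDomSet G (insert z D) := domA_insert G hD
  have h1 : domNum G ≤ D.card + 1 := by
    calc domNum G ≤ (insert z D).card := domNum_le G hins
      _ ≤ D.card + 1 := Finset.card_insert_le _ _
  have h2 : D.card + 1 = domNum G := by omega
  refine ⟨D, hD, h2, hc, fun D' hD' hc' => ?_⟩
  exact domA_unique G h hD' hD (by omega) hc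

/-- If `D` is a `DomA z` set with card γ-1 and some `d ∈ D` is adjacent to `z`,
then `D` dominates `G` — contradiction. -/
theorem crit_adj_false (G : SimpleGraph V) {z : V} {D : Finset V} (hD : DomA G z D)
    (hc : D.card + 1 = domNum G) {d : V} (hd : d ∈ D) (hadj : G.Adj d z) : False := by
  have : IsDomSet G D := by
    intro u
    by_cases hu : u = z
    · exact ⟨d, hd, Or.inr (hu ▸ hadj)⟩
    · exact hD.2 u hu
  exact not_small_dom G this (by omega)

/-- The γ-set `insert z D_z` associated with a critical vertex. -/
theorem crit_insert_gamma (G : SimpleGraph V) {z : V} {D : Finset V} (hD : DomA G z D)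
    (hc : D.card + 1 = domNum G) :
    IsGammaSet G (insert z D) := by
  refine ⟨domA_insert G hD, ?_⟩
  rw [Finset.card_insert_of_notMem hD.1]
  omega

/-- γ-sets avoiding a vertex x with γ(G-x) ≥ γ(G) are unique. -/
theorem avoider_eq (G : SimpleGraph V) (h : HypoUD G) {x : V}
    (hx : domNum G ≤ domNum (vdel G x)) {M M' : Finset V}
    (hM : IsGammaSet G M) (hM' : IsGammaSet G M') (hxM : x ∉ M) (hxM' : x ∉ M') :
    M = M' := by
  have dM : DomA G x M := ⟨hxM, fun u _ => hM.1 u⟩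
  have dM' : DomA G x M' := ⟨hxM', fun u _ => hM'.1 u⟩
  have hle : domNum (vdel G x) ≤ domNum G := hM.2 ▸ domNum_vdel_le G dM
  have heq : domNum (vdel G x) = domNum G := le_antisymm hle hx
  exact domA_unique G h dM dM' (hM.2.trans heq.symm) (hM'.2.trans heq.symm)

/-- Two distinct γ-sets avoiding `z` make `z` critical. -/
theorem two_avoid_crit (G : SimpleGraph V) (h : HypoUD G) {z : V} {M M' : Finset V}
    (hM : IsGammaSet G M) (hM' : IsGammaSet G M') (hne : M ≠ M')
    (hzM : z ∉ M) (hzM' : z ∉ M') : domNum (vdel G z) < domNum G := by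
  by_contra hc
  exact hne (avoider_eq G h (not_lt.1 hc) hM hM' hzM hzM')

/-- EPN existence: if `x ∈ M`, `M` a γ-set, and `γ(G-x) ≥ γ(G) ≥ 1`, there is an
external private neighbor of `x` w.r.t. `M`. -/
theorem exists_epn (G : SimpleGraph V) {x : V} {M : Finset V} (hM : IsGammaSet G M)
    (hxM : x ∈ M) (hx : domNum G ≤ domNum (vdel G x)) (hγ : 1 ≤ domNum G) :
    ∃ t : V, t ∉ M ∧ G.Adj x t ∧ ∀ d ∈ M, (d = t ∨ G.Adj d t) → d = x := by
  have herase : ¬ DomA G x (M.erase x) := by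
    intro hDA
    apply not_small_domA G hDA
    rw [Finset.card_erase_of_mem hxM, hM.2]
    omega
  rw [DomA, not_and_or] at herase
  rcases herase with h1 | h2
  · exact absurd (Finset.notMem_erase x M) h1
  push_neg at h2
  obtain ⟨t, htx, ht⟩ := h2
  have htM : t ∉ M := by
    intro htM
    exact (ht t (Finset.mem_erase.2 ⟨htx, htM⟩)).1 rfl
  have hsing : ∀ d ∈ M, (d = t ∨ G.Adj d t) → d = x := by
    intro d hd hdt
    by_contra hdx
    rcases hdt with h | h
    · exact (ht d (Finset.mem_erase.2 ⟨hdx, hd⟩)).1 h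
    · exact (ht d (Finset.mem_erase.2 ⟨hdx, hd⟩)).2 h
  obtain ⟨d, hd, hdt⟩ := hM.1 t
  have hdx : d = x := hsing d hd hdt
  rcases hdt with h | h
  · exact absurd ((h ▸ hdx : t = x)) htx
  · exact ⟨t, htM, hdx ▸ h, hsing⟩

-- ########## residue lemma ##########
/-- In the easy case, a critical neighbor `w` of `v` is a pendant vertex in `Mb`
whose associated critical set is `Mb.erase w`. -/
theorem residue (G : SimpleGraph V) [Fintype V] [DecidableEq V] (h : HypoUD G) {v w : V} {Mb : Finset V}
    (hMb : IsGammaSet G Mb) (hvMb : v ∉ Mb)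
    (hQ0 : ∀ N, IsGammaSet G N → v ∉ N → N = Mb)
    (heqv : domNum (vdel G v) = domNum G)
    (havw : G.Adj v w)
    (hwcrit : domNum (vdel G w) < domNum G) :
    w ∈ Mb ∧ DomA G w (Mb.erase w) ∧ (Mb.erase w).card + 1 = domNum G ∧
      domNum (vdel G w) + 1 = domNum G ∧ (∀ s, G.Adj s w → s = v) := by
  obtain ⟨D, hD, hc, hcz, _⟩ := critical_data G h hwcrit
  have hvw : v ≠ w := G.ne_of_adj havw
  have hvD : v ∉ D := fun hvD => crit_adj_false G hD hc hvD havw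
  have hins : IsGammaSet G (insert w D) := crit_insert_gamma G hD hc
  have hvins : v ∉ insert w D := by
    simp only [Finset.mem_insert]
    rintro (rfl | hvD') <;> [exact hvw rfl; exact hvD hvD']
  have hMbeq : insert w D = Mb := hQ0 _ hins hvins
  have hwMb : w ∈ Mb := hMbeq ▸ Finset.mem_insert_self w D
  have hDeq : D = Mb.erase w := by
    rw [← hMbeq, Finset.erase_insert hD.1]
  have hDomA : DomA G w (Mb.erase w) := hDeq ▸ hD
  have hcard : (Mb.erase w).card + 1 = domNum G := hDeq ▸ hc
  have hγw : domNum (vdel G w) + 1 = domNum G := by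
    rw [← hcz]; exact hc
  refine ⟨hwMb, hDomA, hcard, hγw, ?_⟩
  intro s hs
  by_contra hsv
  have hsw : s ≠ w := G.ne_of_adj hs
  -- T_s := insert s (Mb.erase w) dominates away from v
  have hTdomA : DomA G v (insert s (Mb.erase w)) := by
    constructor
    · simp only [Finset.mem_insert, Finset.mem_erase]
      rintro (rfl | ⟨-, hvMb'⟩)
      · exact hsv rfl
      · exact hvMb hvMb'
    · intro u hu
      by_cases huw : u = w
      · exact ⟨s, Finset.mem_insert_self _ _, Or.inr (huw ▸ hs)⟩
      · obtain ⟨d, hd, hdu⟩ := hDomA.2 u huw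
        exact ⟨d, Finset.mem_insert_of_mem hd, hdu⟩
  by_cases hsmem : s ∈ Mb.erase w
  · -- card γ - 1 : contradiction with γ(G-v) = γ
    apply not_small_domA G hTdomA
    rw [Finset.insert_eq_self.2 hsmem, heqv, Finset.card_erase_of_mem hwMb, hMb.2]
    have h1 : 1 ≤ domNum G := by omega
    omega
  · -- card γ : T_s = Mb, but w ∉ T_s ∈ Mb
    have hcardT : (insert s (Mb.erase w)).card = domNum G := by
      rw [Finset.card_insert_of_notMem hsmem]
      exact hcard
    have hMbdomA : DomA G v Mb := gammaSet_avoid_domA G hMb hvMb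
    have hTeq : insert s (Mb.erase w) = Mb :=
      domA_unique G h hTdomA hMbdomA (by rw [hcardT, heqv]) (by rw [hMb.2, heqv])
    have : w ∈ insert s (Mb.erase w) := by rw [hTeq]; exact hwMb
    simp only [Finset.mem_insert, Finset.mem_erase] at this
    rcases this with rfl | ⟨hww, -⟩
    · exact hsw rfl
    · exact hww rfl

-- ########## two pendant lemma ##########
/-- Two distinct critical pendant neighbors of `v` are impossible. -/
theorem two_pendant (G : SimpleGraph V) [Fintype V] [DecidableEq V] (h : HypoUD G) {v w y : V} {Mb : Finset V}
    (hMb : IsGammaSet G Mb) (hvMb : v ∉ Mb) (hwy : w ≠ y)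
    (havw : G.Adj v w) (havy : G.Adj v y)
    (hwMb : w ∈ Mb) (hyMb : y ∈ Mb)
    (hDw : DomA G w (Mb.erase w)) (hγw : domNum (vdel G w) + 1 = domNum G)
    (hpw : ∀ s, G.Adj s w → s = v) (hpy : ∀ s, G.Adj s y → s = v) : False := by
  have hvw : v ≠ w := G.ne_of_adj havw
  have hvy : v ≠ y := G.ne_of_adj havy
  set U := insert v ((Mb.erase w).erase y) with hU
  have hUdomA : DomA G w U := by
    constructor
    · simp only [hU, Finset.mem_insert, Finset.mem_erase]
      rintro (rfl | ⟨-, hww, -⟩)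
      · exact hvw rfl
      · exact hww rfl
    · intro u huw
      by_cases huv : u = v
      · exact ⟨v, Finset.mem_insert_self _ _, Or.inl huv.symm⟩
      by_cases huy : u = y
      · exact ⟨v, Finset.mem_insert_self _ _, Or.inr (huy ▸ havy)⟩
      obtain ⟨d, hd, hdu⟩ := hMb.1 u
      have hdw : d ≠ w := by
        rintro rfl
        rcases hdu with rfl | hadj
        · exact huw rfl
        · exact huv (hpw u hadj.symm)
      have hdy : d ≠ y := by
        rintro rfl
        rcases hdu with rfl | hadj
        · exact huy rfl
        · exact huv (hpy u hadj.symm)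
      refine ⟨d, ?_, hdu⟩
      simp only [hU, Finset.mem_insert, Finset.mem_erase]
      exact Or.inr ⟨hdy, hdw, hd⟩
  have hcardU : U.card = domNum (vdel G w) := by
    have hy' : y ∈ Mb.erase w := Finset.mem_erase.2 ⟨fun hyw => hwy hyw.symm, hyMb⟩
    have hv' : v ∉ (Mb.erase w).erase y := by
      simp only [Finset.mem_erase]
      rintro ⟨-, -, hvMb'⟩; exact hvMb hvMb'
    have e1 : ((Mb.erase w).erase y).card = (Mb.erase w).card - 1 :=
      Finset.card_erase_of_mem hy'
    have e2 : (Mb.erase w).card = Mb.card - 1 := Finset.card_erase_of_mem hwMb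
    have e3 : 1 ≤ (Mb.erase w).card := Finset.card_pos.2 ⟨y, hy'⟩
    have e4 : Mb.card = domNum G := hMb.2
    rw [hU, Finset.card_insert_of_notMem hv']
    omega
  have hcardDw : (Mb.erase w).card = domNum (vdel G w) := by
    rw [Finset.card_erase_of_mem hwMb, hMb.2]; omega
  have hUeq : U = Mb.erase w := domA_unique G h hUdomA hDw hcardU hcardDw
  have : v ∈ Mb.erase w := hUeq ▸ Finset.mem_insert_self v _
  exact hvMb (Finset.mem_erase.1 this).2
-- ########## F kill ##########
theorem F_kill (G : SimpleGraph V) [Fintype V] [DecidableEq V] (h : HypoUD G)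
    {v w : V} {Ma Mb : Finset V}
    (hMa : IsGammaSet G Ma) (hMb : IsGammaSet G Mb)
    (hvMa : v ∈ Ma) (hvMb : v ∉ Mb)
    (hQ0 : ∀ N, IsGammaSet G N → v ∉ N → N = Mb)
    (heqv : domNum (vdel G v) = domNum G)
    (hγ2 : 2 ≤ domNum G)
    (hwMa : w ∉ Ma) (havw : G.Adj v w)
    (hsingw : ∀ d ∈ Ma, (d = w ∨ G.Adj d w) → d = v)
    (hwMb : w ∈ Mb)
    (heqw : domNum (vdel G w) = domNum G) : False := by
  have hMane : Ma ≠ Mb := fun he => hvMb (he ▸ hvMa)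
  have hvw : v ≠ w := G.ne_of_adj havw
  have hMadomAw : DomA G w Ma := gammaSet_avoid_domA G hMa hwMa
  have uniqAw : ∀ {D : Finset V}, DomA G w D → D.card = domNum G → D = Ma := by
    intro D hD hc
    exact domA_unique G h hD hMadomAw (by rw [hc, heqw]) (by rw [hMa.2, heqw])
  -- only v can be an external private neighbor of w w.r.t. Mb
  have hOnlyV : ∀ y, y ∉ Mb → G.Adj w y →
      (∀ d ∈ Mb, (d = y ∨ G.Adj d y) → d = w) → y = v := by
    intro y hyMb hwy hysing
    by_cases hyMa : y ∈ Ma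
    · exact hsingw y hyMa (Or.inr hwy.symm)
    · exfalso
      have hcrit := two_avoid_crit G h hMa hMb hMane hyMa hyMb
      obtain ⟨D, hD, hc, hcz, _⟩ := critical_data G h hcrit
      by_cases hwD : w ∈ D
      · exact crit_adj_false G hD hc hwD hwy
      · have hins : IsGammaSet G (insert y D) := crit_insert_gamma G hD hc
        have hdomAw : DomA G w (insert y D) := by
          refine ⟨?_, fun u _ => hins.1 u⟩
          simp only [Finset.mem_insert]
          rintro (rfl | hw')
          · exact (G.ne_of_adj hwy) rfl
          · exact hwD hw'
        have := uniqAw hdomAw hins.2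
        exact hyMa (this ▸ Finset.mem_insert_self y D)
  -- the external private neighbor of w w.r.t. Mb exists and is v
  obtain ⟨u, huMb, hawu, husing'⟩ := exists_epn G hMb hwMb (le_of_eq heqw.symm) (by omega)
  have huv : u = v := hOnlyV u huMb hawu husing'
  rw [huv] at husing'
  have husing : ∀ d ∈ Mb, (d = v ∨ G.Adj d v) → d = w := husing'
  -- T := insert v (Mb.erase w) = Ma
  have hTdomA : DomA G w (insert v (Mb.erase w)) := by
    constructor
    · simp only [Finset.mem_insert, Finset.mem_erase]
      rintro (rfl | ⟨hne, -⟩)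
      · exact hvw rfl
      · exact hne rfl
    · intro y hyw
      by_cases hy : ∃ d ∈ Mb.erase w, (d = y ∨ G.Adj d y)
      · obtain ⟨d, hd, hdy⟩ := hy
        exact ⟨d, Finset.mem_insert_of_mem hd, hdy⟩
      · push_neg at hy
        have hyMb : y ∉ Mb := by
          intro hyMb'
          exact (hy y (Finset.mem_erase.2 ⟨hyw, hyMb'⟩)).1 rfl
        obtain ⟨d, hd, hdy⟩ := hMb.1 y
        have hdw : d = w := by
          by_contra hdw
          have hd' : d ∈ Mb.erase w := Finset.mem_erase.2 ⟨hdw, hd⟩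
          rcases hdy with rfl | hadj
          · exact (hy d hd').1 rfl
          · exact (hy d hd').2 hadj
        have hwady : G.Adj w y := by
          rcases hdy with rfl | hadj
          · exact absurd rfl (hdw ▸ hyw)
          · exact hdw ▸ hadj
        have hysing : ∀ d' ∈ Mb, (d' = y ∨ G.Adj d' y) → d' = w := by
          intro d' hd' hdy'
          by_contra hdw'
          have hmem : d' ∈ Mb.erase w := Finset.mem_erase.2 ⟨hdw', hd'⟩
          rcases hdy' with rfl | hadj
          · exact (hy d' hmem).1 rfl
          · exact (hy d' hmem).2 hadj
        have : y = v := hOnlyV y hyMb hwady hysing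
        exact ⟨v, Finset.mem_insert_self _ _, Or.inl this.symm⟩
  have hvnotin : v ∉ Mb.erase w := fun hm => hvMb (Finset.mem_erase.1 hm).2
  have hcardT : (insert v (Mb.erase w)).card = domNum G := by
    rw [Finset.card_insert_of_notMem hvnotin, Finset.card_erase_of_mem hwMb, hMb.2]
    omega
  have hMaeq : Ma = insert v (Mb.erase w) := (uniqAw hTdomA hcardT).symm
  -- outside vertices are adjacent to neither v nor w
  have hzout : ∀ z, z ∉ Ma → z ∉ Mb → ¬G.Adj v z ∧ ¬G.Adj w z := by
    intro z hzMa hzMb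
    have hcrit := two_avoid_crit G h hMa hMb hMane hzMa hzMb
    obtain ⟨D, hD, hc, hcz, _⟩ := critical_data G h hcrit
    have hins : IsGammaSet G (insert z D) := crit_insert_gamma G hD hc
    have hvz : v ≠ z := fun he => hzMa (he ▸ hvMa)
    have hwz : w ≠ z := fun he => hzMb (he ▸ hwMb)
    have hvD : v ∈ D := by
      by_contra hvD
      have hvins : v ∉ insert z D := by
        simp only [Finset.mem_insert]; rintro (h' | h') <;> [exact hvz h'; exact hvD h']
      exact hzMb ((hQ0 _ hins hvins) ▸ Finset.mem_insert_self z D)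
    have hwD : w ∈ D := by
      by_contra hwD
      have hwins : DomA G w (insert z D) := by
        refine ⟨?_, fun u _ => hins.1 u⟩
        simp only [Finset.mem_insert]; rintro (h' | h') <;> [exact hwz h'; exact hwD h']
      exact hzMa ((uniqAw hwins hins.2) ▸ Finset.mem_insert_self z D)
    exact ⟨fun hadj => crit_adj_false G hD hc hvD hadj,
      fun hadj => crit_adj_false G hD hc hwD hadj⟩
  -- N(w) = {v} and N(v) = {w}
  have hNw : ∀ s, G.Adj s w → s = v := by
    intro s hs
    by_cases hsMa : s ∈ Ma
    · exact hsingw s hsMa (Or.inr hs)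
    · by_cases hsMb : s ∈ Mb
      · exfalso
        apply hsMa
        rw [hMaeq]
        exact Finset.mem_insert_of_mem (Finset.mem_erase.2 ⟨G.ne_of_adj hs, hsMb⟩)
      · exact absurd hs.symm (hzout s hsMa hsMb).2
  have hNv : ∀ s, G.Adj s v → s = w := by
    intro s hs
    by_cases hsMb : s ∈ Mb
    · exact husing s hsMb (Or.inr hs)
    · by_cases hsMa : s ∈ Ma
      · exfalso
        rw [hMaeq] at hsMa
        rcases Finset.mem_insert.1 hsMa with rfl | hmem
        · exact G.irrefl hs
        · exact hsMb (Finset.mem_erase.1 hmem).2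
      · exact absurd hs.symm (hzout s hsMa hsMb).1
  -- pick c₀ ∈ Mb.erase w
  have hCpos : 0 < (Mb.erase w).card := by
    rw [Finset.card_erase_of_mem hwMb, hMb.2]; omega
  obtain ⟨c₀, hc₀⟩ := Finset.card_pos.1 hCpos
  obtain ⟨hc₀w, hc₀Mb⟩ := Finset.mem_erase.1 hc₀
  have hc₀v : c₀ ≠ v := fun he => hvMb (he ▸ hc₀Mb)
  -- the unique γ-set of G - c₀
  obtain ⟨D'', hD'', hcD''⟩ := exists_domA G c₀
  obtain ⟨d, hd, hdw⟩ := hD''.2 w (fun he => hc₀w he.symm)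
  have hdvw : d = w ∨ d = v := by
    rcases hdw with rfl | hadj
    · exact Or.inl rfl
    · exact Or.inr (hNw d hadj)
  by_cases hvD'' : v ∈ D'' <;> by_cases hwD'' : w ∈ D''
  · -- both: erase w still dominates away from c₀
    have hE : DomA G c₀ (D''.erase w) := by
      constructor
      · exact fun hm => hD''.1 (Finset.mem_of_mem_erase hm)
      · intro u hu
        obtain ⟨e, he, heu⟩ := hD''.2 u hu
        by_cases hew : e = w
        · subst hew
          rcases heu with rfl | hadj
          · exact ⟨v, Finset.mem_erase.2 ⟨hvw, hvD''⟩, Or.inr havw⟩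
          · have : u = v := hNw u hadj.symm
            exact ⟨v, Finset.mem_erase.2 ⟨hvw, hvD''⟩, Or.inl this.symm⟩
        · exact ⟨e, Finset.mem_erase.2 ⟨hew, he⟩, heu⟩
    apply not_small_domA G hE
    rw [Finset.card_erase_of_mem hwD'', hcD'']
    have : 0 < D''.card := Finset.card_pos.2 ⟨w, hwD''⟩
    omega
  · -- v ∈ D'', w ∉ D'' : swap v → w gives a second γ-set of G - c₀
    have hT' : DomA G c₀ (insert w (D''.erase v)) := by
      constructor
      · simp only [Finset.mem_insert, Finset.mem_erase]
        rintro (rfl | ⟨-, hmem⟩)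
        · exact hc₀w rfl
        · exact hD''.1 hmem
      · intro u hu
        obtain ⟨e, he, heu⟩ := hD''.2 u hu
        by_cases hev : e = v
        · subst hev
          rcases heu with rfl | hadj
          · exact ⟨w, Finset.mem_insert_self _ _, Or.inr havw.symm⟩
          · have : u = w := hNv u hadj.symm
            exact ⟨w, Finset.mem_insert_self _ _, Or.inl this.symm⟩
        · exact ⟨e, Finset.mem_insert_of_mem (Finset.mem_erase.2 ⟨hev, he⟩), heu⟩
    have hcT' : (insert w (D''.erase v)).card = domNum (vdel G c₀) := by
      have hwno : w ∉ D''.erase v := fun hm => hwD'' (Finset.mem_of_mem_erase hm)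
      rw [Finset.card_insert_of_notMem hwno, Finset.card_erase_of_mem hvD'', hcD'']
      have : 0 < D''.card := Finset.card_pos.2 ⟨v, hvD''⟩
      rw [hcD''] at this
      omega
    have := domA_unique G h hT' hD'' hcT' hcD''
    exact hwD'' (this ▸ Finset.mem_insert_self w _)
  · -- w ∈ D'', v ∉ D'' : swap w → v
    have hT' : DomA G c₀ (insert v (D''.erase w)) := by
      constructor
      · simp only [Finset.mem_insert, Finset.mem_erase]
        rintro (rfl | ⟨-, hmem⟩)
        · exact hc₀v rfl
        · exact hD''.1 hmem
      · intro u hu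
        obtain ⟨e, he, heu⟩ := hD''.2 u hu
        by_cases hew : e = w
        · subst hew
          rcases heu with rfl | hadj
          · exact ⟨v, Finset.mem_insert_self _ _, Or.inr havw⟩
          · have : u = v := hNw u hadj.symm
            exact ⟨v, Finset.mem_insert_self _ _, Or.inl this.symm⟩
        · exact ⟨e, Finset.mem_insert_of_mem (Finset.mem_erase.2 ⟨hew, he⟩), heu⟩
    have hcT' : (insert v (D''.erase w)).card = domNum (vdel G c₀) := by
      have hvno : v ∉ D''.erase w := fun hm => hvD'' (Finset.mem_of_mem_erase hm)
      rw [Finset.card_insert_of_notMem hvno, Finset.card_erase_of_mem hwD'', hcD'']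
      have : 0 < D''.card := Finset.card_pos.2 ⟨w, hwD''⟩
      rw [hcD''] at this
      omega
    have := domA_unique G h hT' hD'' hcT' hcD''
    exact hvD'' (this ▸ Finset.mem_insert_self v _)
  · -- neither: w is not dominated
    rcases hdvw with rfl | rfl
    · exact hwD'' hd
    · exact hvD'' hd
-- ########## P kill ##########
theorem P_kill (G : SimpleGraph V) [Fintype V] [DecidableEq V] (h : HypoUD G)
    {v w : V} {Ma Mb : Finset V}
    (hMa : IsGammaSet G Ma) (hMb : IsGammaSet G Mb)
    (hvMa : v ∈ Ma) (hvMb : v ∉ Mb)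
    (hQ0 : ∀ N, IsGammaSet G N → v ∉ N → N = Mb)
    (heqv : domNum (vdel G v) = domNum G)
    (hγ2 : 2 ≤ domNum G)
    (havw : G.Adj v w) (hwMa : w ∉ Ma)
    (hsingw : ∀ d ∈ Ma, (d = w ∨ G.Adj d w) → d = v)
    (huniq_epn : ∀ y, y ∉ Ma → G.Adj v y →
      (∀ d ∈ Ma, (d = y ∨ G.Adj d y) → d = v) → y = w)
    (hwMb : w ∈ Mb) (hDw : DomA G w (Mb.erase w))
    (hγw : domNum (vdel G w) + 1 = domNum G)
    (hpw : ∀ s, G.Adj s w → s = v) : False := by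
  have hvw : v ≠ w := G.ne_of_adj havw
  have hMane : Ma ≠ Mb := fun he => hvMb (he ▸ hvMa)
  have hMbdomAv : DomA G v Mb := gammaSet_avoid_domA G hMb hvMb
  have uniqAv : ∀ {D : Finset V}, DomA G v D → D.card = domNum G → D = Mb := by
    intro D hD hc
    exact domA_unique G h hD hMbdomAv (by rw [hc, heqv]) (by rw [hMb.2, heqv])
  -- T := insert w (Ma.erase v) = Mb  (so Ma.erase v = Mb.erase w)
  have hTdomA : DomA G v (insert w (Ma.erase v)) := by
    constructor
    · simp only [Finset.mem_insert, Finset.mem_erase]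
      rintro (rfl | ⟨hne, -⟩) <;> [exact hvw rfl; exact hne rfl]
    · intro u hu
      by_cases hud : ∃ e ∈ Ma.erase v, (e = u ∨ G.Adj e u)
      · obtain ⟨e, he, heu⟩ := hud
        exact ⟨e, Finset.mem_insert_of_mem he, heu⟩
      · push_neg at hud
        have huMa : u ∉ Ma := by
          intro huMa'
          exact (hud u (Finset.mem_erase.2 ⟨hu, huMa'⟩)).1 rfl
        obtain ⟨e, he, heu⟩ := hMa.1 u
        have hev : e = v := by
          by_contra hev
          have hmem : e ∈ Ma.erase v := Finset.mem_erase.2 ⟨hev, he⟩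
          rcases heu with rfl | hadj
          · exact (hud e hmem).1 rfl
          · exact (hud e hmem).2 hadj
        have havu : G.Adj v u := by
          rcases heu with rfl | hadj
          · exact absurd rfl (hev ▸ hu)
          · exact hev ▸ hadj
        have husing : ∀ d ∈ Ma, (d = u ∨ G.Adj d u) → d = v := by
          intro d hd hdu
          by_contra hdv
          have hmem : d ∈ Ma.erase v := Finset.mem_erase.2 ⟨hdv, hd⟩
          rcases hdu with rfl | hadj
          · exact (hud d hmem).1 rfl
          · exact (hud d hmem).2 hadj
        have : u = w := huniq_epn u huMa havu husing
        exact ⟨w, Finset.mem_insert_self _ _, Or.inl this.symm⟩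
  have hwnotin : w ∉ Ma.erase v := fun hm => hwMa (Finset.mem_of_mem_erase hm)
  have hcardT : (insert w (Ma.erase v)).card = domNum G := by
    rw [Finset.card_insert_of_notMem hwnotin, Finset.card_erase_of_mem hvMa, hMa.2]
    omega
  have hTeq : insert w (Ma.erase v) = Mb := uniqAv hTdomA hcardT
  have hCC : Ma.erase v = Mb.erase w := by
    rw [← hTeq, Finset.erase_insert hwnotin]
  have hMbC : Mb = insert w (Ma.erase v) := hTeq.symm
  -- neighbors of v other than w lie in C = Ma.erase v
  have hSinC : ∀ z, G.Adj v z → z ≠ w → z ∈ Ma.erase v := by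
    intro z hz1 hz2
    by_cases hzMa : z ∈ Ma
    · exact Finset.mem_erase.2 ⟨fun he => G.irrefl (he ▸ hz1), hzMa⟩
    · exfalso
      have hzMb : z ∉ Mb := by
        rw [hMbC]
        simp only [Finset.mem_insert]
        rintro (rfl | hmem)
        · exact hz2 rfl
        · exact hzMa (Finset.mem_of_mem_erase hmem)
      have hcrit := two_avoid_crit G h hMa hMb hMane hzMa hzMb
      obtain ⟨D, hD, hc, _, _⟩ := critical_data G h hcrit
      by_cases hvD : v ∈ D
      · exact crit_adj_false G hD hc hvD hz1
      · have hins : IsGammaSet G (insert z D) := crit_insert_gamma G hD hc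
        have hvins : v ∉ insert z D := by
          simp only [Finset.mem_insert]
          rintro (rfl | h')
          · exact hzMa hvMa
          · exact hvD h'
        exact hzMb ((hQ0 _ hins hvins) ▸ Finset.mem_insert_self z D)
  -- v has a neighbor c₀ ≠ w
  obtain ⟨c₀, hc₀C, hc₀adj⟩ : ∃ c₀, c₀ ∈ Mb.erase w ∧ G.Adj v c₀ := by
    obtain ⟨d, hd, hdv⟩ := hDw.2 v hvw
    rcases hdv with rfl | hadj
    · exact absurd (Finset.mem_of_mem_erase hd) hvMb
    · exact ⟨d, hd, hadj.symm⟩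
  have hc₀w : c₀ ≠ w := (Finset.mem_erase.1 hc₀C).1
  -- no neighbor of v other than w is critical
  have hnoncrit : ∀ c, G.Adj v c → c ≠ w → ¬ (domNum (vdel G c) < domNum G) := by
    intro c hc1 hc2 hcrit
    obtain ⟨hcMb, hDc, hcc, hγc, hpc⟩ := residue G h hMb hvMb hQ0 heqv hc1 hcrit
    exact two_pendant G h hMb hvMb (fun he => hc2 he.symm) havw hc1 hwMb hcMb hDw hγw
      hpw hpc
  -- every neighbor of v other than w lies in every γ-set of G
  have hSall : ∀ c, G.Adj v c → c ≠ w → ∀ M, IsGammaSet G M → c ∈ M := by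
    intro c hc1 hc2
    have hgec : domNum G ≤ domNum (vdel G c) := not_lt.1 (hnoncrit c hc1 hc2)
    have hcv : c ≠ v := fun he => G.irrefl (he ▸ hc1)
    have hneqc : ¬ (domNum (vdel G c) = domNum G) := by
      intro heqc
      obtain ⟨D', hD', hcD'⟩ := exists_domA G c
      have hcD'' : D'.card = domNum G := by rw [hcD', heqc]
      have hcC : c ∈ Ma.erase v := hSinC c hc1 hc2
      have hwc : w ≠ c := fun he => hc2 he.symm
      -- w's dominator in D' is w or v
      obtain ⟨d, hd, hdw⟩ := hD'.2 w hwc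
      have hdvw : d = w ∨ d = v := by
        rcases hdw with rfl | hadj
        · exact Or.inl rfl
        · exact Or.inr (hpw d hadj)
      have hwD' : w ∉ D' := by
        intro hw'
        by_cases hv' : v ∈ D'
        · -- both v, w in D' : erase w, contradiction with γ(G-c) = γ
          have hE : DomA G c (D'.erase w) := by
            constructor
            · exact fun hm => hD'.1 (Finset.mem_of_mem_erase hm)
            · intro u hu
              obtain ⟨e, he, heu⟩ := hD'.2 u hu
              by_cases hew : e = w
              · subst hew
                rcases heu with rfl | hadj
                · exact ⟨v, Finset.mem_erase.2 ⟨hvw, hv'⟩, Or.inr havw⟩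
                · exact ⟨v, Finset.mem_erase.2 ⟨hvw, hv'⟩,
                    Or.inl (hpw u hadj.symm).symm⟩
              · exact ⟨e, Finset.mem_erase.2 ⟨hew, he⟩, heu⟩
          apply not_small_domA G hE
          rw [Finset.card_erase_of_mem hw', hcD']
          have : 0 < D'.card := Finset.card_pos.2 ⟨w, hw'⟩
          rw [hcD'] at this
          omega
        · -- w ∈ D', v ∉ D' : swap w → v gives second γ-set of G - c
          have hT₀ : DomA G c (insert v (D'.erase w)) := by
            constructor
            · simp only [Finset.mem_insert, Finset.mem_erase]
              rintro (rfl | ⟨-, hm⟩)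
              · exact hcv.symm rfl
              · exact hD'.1 hm
            · intro u hu
              obtain ⟨e, he, heu⟩ := hD'.2 u hu
              by_cases hew : e = w
              · subst hew
                rcases heu with rfl | hadj
                · exact ⟨v, Finset.mem_insert_self _ _, Or.inr havw⟩
                · exact ⟨v, Finset.mem_insert_self _ _,
                    Or.inl (hpw u hadj.symm).symm⟩
              · exact ⟨e, Finset.mem_insert_of_mem (Finset.mem_erase.2 ⟨hew, he⟩), heu⟩
          have hcT₀ : (insert v (D'.erase w)).card = domNum (vdel G c) := by
            have hvno : v ∉ D'.erase w := fun hm => hv' (Finset.mem_of_mem_erase hm)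
            rw [Finset.card_insert_of_notMem hvno, Finset.card_erase_of_mem hw', hcD']
            have : 0 < D'.card := Finset.card_pos.2 ⟨w, hw'⟩
            rw [hcD'] at this
            omega
          have := domA_unique G h hT₀ hD' hcT₀ hcD'
          exact hv' (this ▸ Finset.mem_insert_self v _)
      have hvD' : v ∈ D' := by
        rcases hdvw with rfl | rfl
        · exact absurd hd hwD'
        · exact hd
      -- D' is a γ-set of G
      have hD'g : IsGammaSet G D' := by
        refine ⟨fun u => ?_, hcD''⟩
        by_cases hu : u = c
        · exact ⟨v, hvD', Or.inr (hu ▸ hc1)⟩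
        · exact hD'.2 u hu
      -- every neighbor y ≠ w of v is dominated by D'.erase v
      have hρ : ∀ y, G.Adj v y → y ≠ w → ∃ e ∈ D'.erase v, e = y ∨ G.Adj e y := by
        intro y hy1 hy2
        by_cases hyd : ∃ e ∈ D'.erase v, (e = y ∨ G.Adj e y)
        · exact hyd
        exfalso
        push_neg at hyd
        have hyv : y ≠ v := fun he => G.irrefl (he ▸ hy1)
        have hyD' : y ∉ D' := by
          intro hy'
          exact (hyd y (Finset.mem_erase.2 ⟨hyv, hy'⟩)).1 rfl
        have hyle : domNum (vdel G y) ≤ domNum G := by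
          have : DomA G y D' := ⟨hyD', fun u _ => hD'g.1 u⟩
          calc domNum (vdel G y) ≤ D'.card := domNum_vdel_le G this
            _ = domNum G := hcD''
        have heqy : domNum (vdel G y) = domNum G :=
          le_antisymm hyle (not_lt.1 (hnoncrit y hy1 hy2))
        have hyMa : y ∈ Ma := Finset.mem_of_mem_erase (hSinC y hy1 hy2)
        obtain ⟨ρ, hρMa, hayρ, hsingρ⟩ :=
          exists_epn G hMa hyMa (le_of_eq heqy.symm) (by omega)
        have hρw : ρ ≠ w := by
          rintro rfl
          exact hyv (hpw y hayρ)
        have hρMb : ρ ∉ Mb := by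
          rw [hMbC]
          simp only [Finset.mem_insert]
          rintro (rfl | hmem)
          · exact hρw rfl
          · exact hρMa (Finset.mem_of_mem_erase hmem)
        have hρcrit := two_avoid_crit G h hMa hMb hMane hρMa hρMb
        obtain ⟨Dρ, hDρ, hcρ, _, _⟩ := critical_data G h hρcrit
        have hyDρ : y ∉ Dρ := fun hy' => crit_adj_false G hDρ hcρ hy' hayρ
        have hins : IsGammaSet G (insert ρ Dρ) := crit_insert_gamma G hDρ hcρ
        have hdomAy : DomA G y (insert ρ Dρ) := by
          refine ⟨?_, fun u _ => hins.1 u⟩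
          simp only [Finset.mem_insert]
          rintro (rfl | h')
          · exact G.irrefl hayρ
          · exact hyDρ h'
        have hD'domAy : DomA G y D' := ⟨hyD', fun u _ => hD'g.1 u⟩
        have heq' : insert ρ Dρ = D' :=
          domA_unique G h hdomAy hD'domAy (by rw [hins.2, heqy]) (by rw [hcD'', heqy])
        have hρD' : ρ ∈ D'.erase v := by
          refine Finset.mem_erase.2 ⟨fun he => hρMa (he ▸ hvMa), ?_⟩
          rw [← heq']
          exact Finset.mem_insert_self ρ Dρ
        exact (hyd ρ hρD').2 hayρ.symm
      -- T := insert w (D'.erase v) is a γ-set of G avoiding v, so = Mb, so D' = Ma ∋ c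
      have hT : IsGammaSet G (insert w (D'.erase v)) := by
        constructor
        · intro u
          by_cases huv : u = v
          · exact ⟨w, Finset.mem_insert_self _ _, Or.inr (huv ▸ havw.symm)⟩
          by_cases huw : u = w
          · exact ⟨w, Finset.mem_insert_self _ _, Or.inl huw.symm⟩
          obtain ⟨e, he, heu⟩ := hD'g.1 u
          by_cases hev : e = v
          · rw [hev] at heu
            have havu : G.Adj v u := by
              rcases heu with rfl | hadj
              · exact absurd rfl huv
              · exact hadj
            obtain ⟨e', he', heu'⟩ := hρ u havu huw
            exact ⟨e', Finset.mem_insert_of_mem he', heu'⟩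
          · exact ⟨e, Finset.mem_insert_of_mem (Finset.mem_erase.2 ⟨hev, he⟩), heu⟩
        · have hwno : w ∉ D'.erase v := fun hm => hwD' (Finset.mem_of_mem_erase hm)
          rw [Finset.card_insert_of_notMem hwno, Finset.card_erase_of_mem hvD', hcD'']
          omega
      have hvT : v ∉ insert w (D'.erase v) := by
        simp only [Finset.mem_insert, Finset.mem_erase]
        rintro (rfl | ⟨hne, -⟩) <;> [exact hvw rfl; exact hne rfl]
      have hTMb : insert w (D'.erase v) = Mb := hQ0 _ hT hvT
      have hD'C : D'.erase v = Ma.erase v := by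
        have hwno : w ∉ D'.erase v := fun hm => hwD' (Finset.mem_of_mem_erase hm)
        rw [hCC, ← hTMb, Finset.erase_insert hwno]
      have hD'Ma : D' = Ma := by
        calc D' = insert v (D'.erase v) := (Finset.insert_erase hvD').symm
          _ = insert v (Ma.erase v) := by rw [hD'C]
          _ = Ma := Finset.insert_erase hvMa
      exact hD'.1 (hD'Ma ▸ Finset.mem_of_mem_erase hcC)
    have hgtc : domNum G < domNum (vdel G c) := lt_of_le_of_ne hgec (Ne.symm hneqc)
    intro M hM
    by_contra hcM
    have : domNum (vdel G c) ≤ domNum G := by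
      calc domNum (vdel G c) ≤ M.card := domNum_vdel_le G (gammaSet_avoid_domA G hM hcM)
        _ = domNum G := hM.2
    omega
  -- final case split on the existence of an outside vertex
  by_cases hout : ∃ z, z ∉ Ma ∧ z ∉ Mb
  · obtain ⟨z, hzMa, hzMb⟩ := hout
    have hzv : z ≠ v := fun he => hzMa (he ▸ hvMa)
    have hzw : z ≠ w := fun he => hzMb (he ▸ hwMb)
    have hcrit := two_avoid_crit G h hMa hMb hMane hzMa hzMb
    obtain ⟨D, hD, hc, hcz, _⟩ := critical_data G h hcrit
    have hins : IsGammaSet G (insert z D) := crit_insert_gamma G hD hc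
    have hvD : v ∈ D := by
      by_contra hvD
      have hvins : v ∉ insert z D := by
        simp only [Finset.mem_insert]
        rintro (rfl | h') <;> [exact hzv rfl; exact hvD h']
      exact hzMb ((hQ0 _ hins hvins) ▸ Finset.mem_insert_self z D)
    have hwD : w ∉ D := by
      intro hwD
      have hE : DomA G z (D.erase w) := by
        constructor
        · exact fun hm => hD.1 (Finset.mem_of_mem_erase hm)
        · intro u hu
          obtain ⟨e, he, heu⟩ := hD.2 u hu
          by_cases hew : e = w
          · subst hew
            rcases heu with rfl | hadj
            · exact ⟨v, Finset.mem_erase.2 ⟨hvw, hvD⟩, Or.inr havw⟩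
            · exact ⟨v, Finset.mem_erase.2 ⟨hvw, hvD⟩, Or.inl (hpw u hadj.symm).symm⟩
          · exact ⟨e, Finset.mem_erase.2 ⟨hew, he⟩, heu⟩
      apply not_small_domA G hE
      rw [Finset.card_erase_of_mem hwD, hcz]
      have : 0 < D.card := Finset.card_pos.2 ⟨w, hwD⟩
      rw [hcz] at this
      omega
    have hSD : ∀ c, G.Adj v c → c ≠ w → c ∈ D := by
      intro c hc1 hc2
      have := hSall c hc1 hc2 _ hins
      rcases Finset.mem_insert.1 this with rfl | h'
      · exact absurd (Finset.mem_of_mem_erase (hSinC c hc1 hc2)) hzMa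
      · exact h'
    have hT : IsGammaSet G (insert z (insert w (D.erase v))) := by
      constructor
      · intro u
        by_cases huz : u = z
        · exact ⟨z, Finset.mem_insert_self _ _, Or.inl huz.symm⟩
        by_cases huw : u = w
        · exact ⟨w, Finset.mem_insert_of_mem (Finset.mem_insert_self _ _),
            Or.inl huw.symm⟩
        by_cases huv : u = v
        · exact ⟨w, Finset.mem_insert_of_mem (Finset.mem_insert_self _ _),
            Or.inr (huv ▸ havw.symm)⟩
        obtain ⟨e, he, heu⟩ := hD.2 u huz
        by_cases hev : e = v
        · rw [hev] at heu
          have havu : G.Adj v u := by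
            rcases heu with rfl | hadj
            · exact absurd rfl huv
            · exact hadj
          have huD : u ∈ D := hSD u havu huw
          exact ⟨u, Finset.mem_insert_of_mem (Finset.mem_insert_of_mem
            (Finset.mem_erase.2 ⟨huv, huD⟩)), Or.inl rfl⟩
        · exact ⟨e, Finset.mem_insert_of_mem (Finset.mem_insert_of_mem
            (Finset.mem_erase.2 ⟨hev, he⟩)), heu⟩
      · have hwno : w ∉ D.erase v := fun hm => hwD (Finset.mem_of_mem_erase hm)
        have hzno : z ∉ insert w (D.erase v) := by
          simp only [Finset.mem_insert, Finset.mem_erase]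
          rintro (rfl | ⟨-, hm⟩)
          · exact hzw rfl
          · exact hD.1 hm
        rw [Finset.card_insert_of_notMem hzno, Finset.card_insert_of_notMem hwno,
          Finset.card_erase_of_mem hvD, hcz]
        have : 0 < D.card := Finset.card_pos.2 ⟨v, hvD⟩
        rw [hcz] at this
        omega
    have hvT : v ∉ insert z (insert w (D.erase v)) := by
      simp only [Finset.mem_insert, Finset.mem_erase]
      rintro (rfl | rfl | ⟨hne, -⟩)
      · exact hzv rfl
      · exact hvw rfl
      · exact hne rfl
    have := hQ0 _ hT hvT
    exact hzMb (this ▸ Finset.mem_insert_self z _)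
  · push_neg at hout
    -- no outside vertex : B := insert v (C \ N(v)) is a small dominating set
    classical
    set Cns := (Ma.erase v).filter (fun y => ¬ G.Adj v y) with hCns
    have hB : IsDomSet G (insert v Cns) := by
      intro u
      by_cases huv : u = v
      · exact ⟨v, Finset.mem_insert_self _ _, Or.inl huv.symm⟩
      by_cases hadj : G.Adj v u
      · exact ⟨v, Finset.mem_insert_self _ _, Or.inr hadj⟩
      · have huC : u ∈ Ma.erase v := by
          by_cases huMa : u ∈ Ma
          · exact Finset.mem_erase.2 ⟨huv, huMa⟩
          · have hu : u ∈ Mb := hout u huMa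
            rw [hMbC] at hu
            rcases Finset.mem_insert.1 hu with rfl | hu'
            · exact absurd havw hadj
            · exact hu'
        exact ⟨u, Finset.mem_insert_of_mem (Finset.mem_filter.2 ⟨huC, hadj⟩),
          Or.inl rfl⟩
    apply not_small_dom G hB
    have hc₀C' : c₀ ∈ Ma.erase v := hCC ▸ hc₀C
    have hsub : Cns ⊂ Ma.erase v := by
      refine ⟨Finset.filter_subset _ _, fun hsub' => ?_⟩
      have := hsub' hc₀C'
      rw [hCns] at this
      exact (Finset.mem_filter.1 this).2 hc₀adj
    have h1 : Cns.card < (Ma.erase v).card := Finset.card_lt_card hsub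
    have h2 : (Ma.erase v).card = domNum G - 1 := by
      rw [Finset.card_erase_of_mem hvMa, hMa.2]
    have h3 : (insert v Cns).card ≤ Cns.card + 1 := Finset.card_insert_le _ _
    omega
-- ########## gamma ≥ 2 ##########
theorem gamma_ge_two (G : SimpleGraph V) [Fintype V] [DecidableEq V] (h : HypoUD G)
    (h3 : 3 ≤ Fintype.card V) : 2 ≤ domNum G := by
  obtain ⟨M₁, M₂, hM₁, hM₂, hne⟩ := h.1
  by_contra hlt
  push_neg at hlt
  have h0 : domNum G ≠ 0 := by
    intro h0
    have hM₁e : M₁ = ∅ := Finset.card_eq_zero.1 (hM₁.2.trans h0)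
    have hpos : 0 < Fintype.card V := by omega
    obtain ⟨x⟩ := Fintype.card_pos_iff.1 hpos
    obtain ⟨u, hu, -⟩ := hM₁.1 x
    rw [hM₁e] at hu
    exact absurd hu (Finset.notMem_empty u)
  have h1 : domNum G = 1 := by omega
  obtain ⟨a, ha⟩ := Finset.card_eq_one.1 (hM₁.2.trans h1)
  obtain ⟨b, hb⟩ := Finset.card_eq_one.1 (hM₂.2.trans h1)
  have hab : a ≠ b := by
    rintro rfl
    exact hne (ha.trans hb.symm)
  obtain ⟨c, hc⟩ : ∃ c : V, c ∉ ({a, b} : Finset V) := by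
    by_contra hall
    push_neg at hall
    have : (Finset.univ : Finset V) ⊆ {a, b} := fun x _ => hall x
    have h2 : Fintype.card V ≤ ({a, b} : Finset V).card := by
      rw [← Finset.card_univ]
      exact Finset.card_le_card this
    have h4 : ({a, b} : Finset V).card ≤ 2 := Finset.card_le_two
    omega
  simp only [Finset.mem_insert, Finset.mem_singleton] at hc
  push_neg at hc
  obtain ⟨hca, hcb⟩ := hc
  have hda : DomA G c {a} := by
    refine ⟨by simp [hca], fun u _ => ?_⟩
    obtain ⟨d, hd, hdu⟩ := hM₁.1 u
    rw [ha, Finset.mem_singleton] at hd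
    exact ⟨a, Finset.mem_singleton_self a, hd ▸ hdu⟩
  have hdb : DomA G c {b} := by
    refine ⟨by simp [hcb], fun u _ => ?_⟩
    obtain ⟨d, hd, hdu⟩ := hM₂.1 u
    rw [hb, Finset.mem_singleton] at hd
    exact ⟨b, Finset.mem_singleton_self b, hd ▸ hdu⟩
  have hγc : domNum (vdel G c) = 1 := by
    have hle : domNum (vdel G c) ≤ 1 := by
      have := domNum_vdel_le G hda
      simpa using this
    have hge : domNum (vdel G c) ≠ 0 := by
      intro h0'
      obtain ⟨D, hD, hc0⟩ := exists_domA G c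
      have hDe : D = ∅ := Finset.card_eq_zero.1 (hc0.trans h0')
      obtain ⟨d, hd, -⟩ := hD.2 a (fun he => hca he.symm)
      rw [hDe] at hd
      exact absurd hd (Finset.notMem_empty d)
    omega
  have : ({a} : Finset V) = {b} :=
    domA_unique G h hda hdb (by simp [hγc]) (by simp [hγc])
  exact hab (Finset.singleton_injective this)


end HypoUDAux

theorem hypoUD_vc [Fintype V] [DecidableEq V] (G : SimpleGraph V)
    (h : HypoUD G) (h3 : 3 ≤ Fintype.card V) :
    ∀ v : V, domNum (vdel G v) < domNum G := by
  have hγ2 : 2 ≤ domNum G := gamma_ge_two G h h3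
  intro v
  by_contra hv'
  have hv : domNum G ≤ domNum (vdel G v) := not_lt.1 hv'
  obtain ⟨M₁, M₂, hM₁, hM₂, hMne⟩ := h.1
  by_cases hEasy : ∃ N : Finset V, IsGammaSet G N ∧ v ∉ N
  · -- EASY CASE: some γ-set avoids v
    obtain ⟨Mb, hMb, hvMb⟩ := hEasy
    have heqv : domNum (vdel G v) = domNum G := by
      have hle : domNum (vdel G v) ≤ domNum G := by
        calc domNum (vdel G v) ≤ Mb.card :=
              domNum_vdel_le G (gammaSet_avoid_domA G hMb hvMb)
          _ = domNum G := hMb.2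
      omega
    have hQ0 : ∀ N, IsGammaSet G N → v ∉ N → N = Mb := fun N h1 h2 =>
      avoider_eq G h hv h1 hMb h2 hvMb
    obtain ⟨Ma, hMa, hvMa⟩ : ∃ Ma, IsGammaSet G Ma ∧ v ∈ Ma := by
      by_cases h1 : v ∈ M₁
      · exact ⟨M₁, hM₁, h1⟩
      by_cases h2 : v ∈ M₂
      · exact ⟨M₂, hM₂, h2⟩
      exact absurd ((hQ0 _ hM₁ h1).trans (hQ0 _ hM₂ h2).symm) hMne
    have hMane : Ma ≠ Mb := fun he => hvMb (he ▸ hvMa)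
    obtain ⟨w, hwMa, havw, hsingw⟩ := exists_epn G hMa hvMa hv (by omega)
    by_cases hwcrit : domNum (vdel G w) < domNum G
    · -- w critical: residue packet, uniqueness, P_kill
      obtain ⟨hwMb, hDw, hcw, hγw, hpw⟩ := residue G h hMb hvMb hQ0 heqv havw hwcrit
      have huniq : ∀ y, y ∉ Ma → G.Adj v y →
          (∀ d ∈ Ma, (d = y ∨ G.Adj d y) → d = v) → y = w := by
        intro y hyMa havy hsingy
        by_contra hyw
        by_cases hycrit : domNum (vdel G y) < domNum G
        · obtain ⟨hyMb, hDy, hcy, hγy, hpy⟩ :=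
            residue G h hMb hvMb hQ0 heqv havy hycrit
          exact two_pendant G h hMb hvMb (fun he => hyw he.symm) havw havy hwMb hyMb
            hDw hγw hpw hpy
        · have hyMb : y ∈ Mb := by
            by_contra hyMb
            exact hycrit (two_avoid_crit G h hMa hMb hMane hyMa hyMb)
          have heqy : domNum (vdel G y) = domNum G := by
            have hle : domNum (vdel G y) ≤ domNum G := by
              calc domNum (vdel G y) ≤ Ma.card :=
                    domNum_vdel_le G (gammaSet_avoid_domA G hMa hyMa)
                _ = domNum G := hMa.2
            have := not_lt.1 hycrit
            omega
          exact F_kill G h hMa hMb hvMa hvMb hQ0 heqv hγ2 hyMa havy hsingy hyMb heqy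
      exact P_kill G h hMa hMb hvMa hvMb hQ0 heqv hγ2 havw hwMa hsingw huniq hwMb hDw
        hγw hpw
    · -- w even: F_kill
      have hwMb : w ∈ Mb := by
        by_contra hwMb
        exact hwcrit (two_avoid_crit G h hMa hMb hMane hwMa hwMb)
      have heqw : domNum (vdel G w) = domNum G := by
        have hle : domNum (vdel G w) ≤ domNum G := by
          calc domNum (vdel G w) ≤ Ma.card :=
                domNum_vdel_le G (gammaSet_avoid_domA G hMa hwMa)
            _ = domNum G := hMa.2
        have := not_lt.1 hwcrit
        omega
      exact F_kill G h hMa hMb hvMa hvMb hQ0 heqv hγ2 hwMa havw hsingw hwMb heqw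
  · -- HARD CASE: every γ-set contains v
    push_neg at hEasy
    have hvM₁ : v ∈ M₁ := hEasy M₁ hM₁
    obtain ⟨w, hwM₁, havw, hsingw⟩ := exists_epn G hM₁ hvM₁ hv (by omega)
    have hwncrit : ¬ domNum (vdel G w) < domNum G := by
      intro hcrit
      obtain ⟨D, hD, hc, -, -⟩ := critical_data G h hcrit
      by_cases hvD : v ∈ D
      · exact crit_adj_false G hD hc hvD havw
      · have hins := crit_insert_gamma G hD hc
        have hvins : v ∈ insert w D := hEasy _ hins
        rcases Finset.mem_insert.1 hvins with rfl | h'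
        · exact G.irrefl havw
        · exact hvD h'
    have hwM₂ : w ∈ M₂ := by
      by_contra hwM₂
      exact hwncrit (two_avoid_crit G h hM₁ hM₂ hMne hwM₁ hwM₂)
    have heqw : domNum (vdel G w) = domNum G := by
      have hle : domNum (vdel G w) ≤ domNum G := by
        calc domNum (vdel G w) ≤ M₁.card :=
              domNum_vdel_le G (gammaSet_avoid_domA G hM₁ hwM₁)
          _ = domNum G := hM₁.2
      have := not_lt.1 hwncrit
      omega
    obtain ⟨u, huM₂, hawu, husing⟩ := exists_epn G hM₂ hwM₂ (le_of_eq heqw.symm) (by omega)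
    have hM₁domAw : DomA G w M₁ := gammaSet_avoid_domA G hM₁ hwM₁
    have huM₁ : u ∈ M₁ := by
      by_contra huM₁
      have hucrit := two_avoid_crit G h hM₁ hM₂ hMne huM₁ huM₂
      obtain ⟨D, hD, hc, -, -⟩ := critical_data G h hucrit
      by_cases hwD : w ∈ D
      · exact crit_adj_false G hD hc hwD hawu
      · have hins := crit_insert_gamma G hD hc
        have hdomAw : DomA G w (insert u D) := by
          refine ⟨?_, fun x _ => hins.1 x⟩
          simp only [Finset.mem_insert]
          rintro (rfl | h')
          · exact G.irrefl hawu
          · exact hwD h'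
        have := domA_unique G h hdomAw hM₁domAw (by rw [hins.2, heqw])
          (by rw [hM₁.2, heqw])
        exact huM₁ (this ▸ Finset.mem_insert_self u D)
    have huv : u = v := hsingw u huM₁ (Or.inr hawu.symm)
    exact huM₂ (huv ▸ hEasy M₂ hM₂)
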